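/- Let n ≥ 2 and let α_n be an optimal set of n-means for P. Then α_n ∩ [0,1/3] ≠ ∅ and α_n ∩ [2/3,1] ≠ ∅. Moreover, for every a ∈ α_n ∩ [0,1/3] the Voronoi region M(a|α_n) contains no point of [2/3,1], and for every a ∈ α_n ∩ [2/3,1] the Voronoi region M(a|α_n) contains no point of [0,1/3]. -/

import Mathlib

/-!
Since `S_{j+2} = T ∘ S_{j+1}` for `T x = x / 3 + 2 / 3`, the self-similarity equation collapses
to `P = ½ P ∘ S₁⁻¹ + ½ P ∘ T⁻¹`: `P` is the Cantor measure. This gives `∫ x dP = 1/2`,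
`∫ x² dP = 3/8` and closed forms for `∫_{[0,1/3]} (x - p)² dP` and `∫_{[2/3,1]} (x - p)² dP`; in
particular `{1/6, 5/6}` has error `1/72`, so `V_n ≤ 1/72` for `n ≥ 2`.

An optimal set lies in `[0,1]`: the support of `P` is infinite, so every Voronoi region of an
optimal set has positive mass (otherwise drop its centre and add a new support point), and a
centre outside `[0,1]` could then be moved to the nearest endpoint with a strict gain. If one of
the four conclusions failed, one of `[0,1/3]`, `[2/3,1]` would be served no better than from one
of its endpoints, which already costs `1/48 > 1/72`.
-/

open MeasureTheory Set
open scoped ENNReal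

noncomputable section

/-- The similarity map `S_j(x) = x/3^j + 1 - 1/3^(j-1)`. -/
def Smap (j : ℕ) (x : ℝ) : ℝ := x / 3 ^ j + 1 - 1 / 3 ^ (j - 1)

/-- The similarity ratio `s_j = 3^(-j)`. -/
def srat (j : ℕ) : ℝ := (3 : ℝ)⁻¹ ^ j

/-- The probability `p_j = 2^(-j)`. -/
def prob (j : ℕ) : ℝ := (2 : ℝ)⁻¹ ^ j

/-- `J_j = S_j([0,1])`. -/
def Jset (j : ℕ) : Set ℝ := Smap j '' Set.Icc 0 1

/-- For a word `ω = ω₁⋯ω_n`, `S_ω = S_{ω₁} ∘ ⋯ ∘ S_{ω_n}`. -/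
def Sword : List ℕ → ℝ → ℝ
  | [] => id
  | j :: ω => Smap j ∘ Sword ω

/-- `s_ω = s_{ω₁} ⋯ s_{ω_n}`. -/
def sword (ω : List ℕ) : ℝ := (ω.map srat).prod

/-- `p_ω = p_{ω₁} ⋯ p_{ω_n}`. -/
def pword (ω : List ℕ) : ℝ := (ω.map prob).prod

/-- `J_ω = S_ω([0,1])`. -/
def Jword (ω : List ℕ) : Set ℝ := Sword ω '' Set.Icc 0 1

/-- `ω⁻(ω_{|ω|} + j)` : the word obtained from `ω` by increasing its last letter by `j`. -/
def wordInc (ω : List ℕ) (j : ℕ) : List ℕ := ω.dropLast ++ [ω.getLastD 1 + j]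

/-- `a(ω) = S_ω(1/2)`. -/
def aw (ω : List ℕ) : ℝ := Sword ω (1 / 2)

/-- `a(ω, ∞) = S_{ω⁻(ω_{|ω|}+1)}(1/2) + s_{ω⁻(ω_{|ω|}+1)}`. -/
def awInf (ω : List ℕ) : ℝ := Sword (wordInc ω 1) (1 / 2) + sword (wordInc ω 1)

/-- `J_{(ω,∞)} = ⋃_{j ≥ 1} J_{ω⁻(ω_{|ω|}+j)}`. -/
def JwordInf (ω : List ℕ) : Set ℝ := ⋃ j : ℕ, Jword (wordInc ω (j + 1))

/-- A (nonempty) word over the alphabet `ℕ = {1, 2, 3, …}`. -/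
def IsWord (ω : List ℕ) : Prop := ω ≠ [] ∧ ∀ i ∈ ω, 1 ≤ i

/-- The self-similarity equation `P = ∑_{j=1}^∞ 2^{-j} · P ∘ S_j^{-1}`. -/
def SelfSim (P : Measure ℝ) : Prop :=
  P = Measure.sum fun j : ℕ => ((2 : ℝ≥0∞) ^ (j + 1))⁻¹ • P.map (Smap (j + 1))

/-- The distortion error `∫ min_{a ∈ A} (x - a)² dP(x)` of a set `A` of points. -/
def err (P : Measure ℝ) (A : Set ℝ) : ℝ :=
  ∫ x, sInf ((fun a => (x - a) ^ 2) '' A) ∂P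

/-- The `n`-th quantization error. -/
def quantErr (P : Measure ℝ) (n : ℕ) : ℝ :=
  sInf {v | ∃ A : Set ℝ, A.Finite ∧ A.Nonempty ∧ A.ncard ≤ n ∧ v = err P A}

/-- An optimal set of `n`-means. -/
def IsOptimal (P : Measure ℝ) (n : ℕ) (A : Set ℝ) : Prop :=
  A.Finite ∧ A.Nonempty ∧ A.ncard ≤ n ∧ err P A = quantErr P n

/-- The Voronoi region of `a` with respect to `A`. -/
def voronoi (A : Set ℝ) (a : ℝ) : Set ℝ := {x | ∀ b ∈ A, |x - a| ≤ |x - b|}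

/-- `α(ℓ) = {a(ω) : p_ω = 2^{-ℓ}} ∪ {a(ω,∞) : p_ω = 2^{-ℓ}}`. -/
def alphaSet (l : ℕ) : Set ℝ :=
  {x | ∃ ω : List ℕ, IsWord ω ∧ pword ω = (2 : ℝ)⁻¹ ^ l ∧ (x = aw ω ∨ x = awInf ω)}

/-- The set `α_n(I)` built from `α(ℓ)` and `I ⊆ α(ℓ)`. -/
def alphaNI (l : ℕ) (I : Set ℝ) : Set ℝ :=
  (alphaSet l \ I)
    ∪ {x | ∃ ω : List ℕ, IsWord ω ∧ pword ω = (2 : ℝ)⁻¹ ^ l ∧ aw ω ∈ I ∧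
        (x = aw (ω ++ [1]) ∨ x = awInf (ω ++ [1]))}
    ∪ {x | ∃ ω : List ℕ, IsWord ω ∧ pword ω = (2 : ℝ)⁻¹ ^ l ∧ awInf ω ∈ I ∧
        (x = aw (wordInc ω 1) ∨ x = awInf (wordInc ω 1))}

open Metric

lemma sInf_sq_image_eq_infDist_sq {A : Set ℝ} (hA : A.Finite) (hne : A.Nonempty) (x : ℝ) :
    sInf ((fun a => (x - a) ^ 2) '' A) = infDist x A ^ 2 := by
  obtain ⟨b, hb, hxb⟩ := hA.isCompact.exists_infDist_eq_dist hne x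
  refine le_antisymm ?_ (le_csInf (hne.image _) ?_)
  · rw [hxb, Real.dist_eq, sq_abs]
    exact csInf_le (hA.image _).bddBelow ⟨b, hb, rfl⟩
  · rintro _ ⟨a, ha, rfl⟩
    show _ ≤ (x - a) ^ 2
    rw [← sq_abs (x - a), ← Real.dist_eq]
    exact pow_le_pow_left₀ infDist_nonneg (infDist_le_dist_of_mem ha) 2

lemma err_eq_integral_infDist_sq (P : Measure ℝ) {A : Set ℝ} (hA : A.Finite)
    (hne : A.Nonempty) : err P A = ∫ x, infDist x A ^ 2 ∂P := by
  simp only [err, sInf_sq_image_eq_infDist_sq hA hne]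

lemma err_nonneg (P : Measure ℝ) (A : Set ℝ) : 0 ≤ err P A :=
  integral_nonneg fun _ => Real.sInf_nonneg (by rintro _ ⟨a, -, rfl⟩; positivity)

lemma quantErr_le_err (P : Measure ℝ) {n : ℕ} {A : Set ℝ} (hA : A.Finite) (hne : A.Nonempty)
    (hcard : A.ncard ≤ n) : quantErr P n ≤ err P A :=
  csInf_le ⟨0, by rintro _ ⟨B, -, -, -, rfl⟩; exact err_nonneg P B⟩ ⟨A, hA, hne, hcard, rfl⟩

lemma infDist_sq_le {A : Set ℝ} {a : ℝ} (ha : a ∈ A) (x : ℝ) : infDist x A ^ 2 ≤ (x - a) ^ 2 := by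
  rw [← sq_abs (x - a), ← Real.dist_eq]
  exact pow_le_pow_left₀ infDist_nonneg (infDist_le_dist_of_mem ha) 2

lemma infDist_eq_of_mem_voronoi {A : Set ℝ} {a x : ℝ} (ha : a ∈ A) (hx : x ∈ voronoi A a) :
    infDist x A = |x - a| := by
  refine le_antisymm (Real.dist_eq x a ▸ infDist_le_dist_of_mem ha) ?_
  exact (le_infDist ⟨a, ha⟩).2 fun b hb => (Real.dist_eq x b).symm ▸ hx b hb

lemma mem_voronoi_of_infDist_eq {A : Set ℝ} {a x : ℝ} (h : infDist x A = dist x a) :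
    x ∈ voronoi A a := fun b hb => by
  simpa only [← Real.dist_eq, ← h] using infDist_le_dist_of_mem hb

lemma continuous_infDist_sq (A : Set ℝ) : Continuous fun x : ℝ => infDist x A ^ 2 :=
  (continuous_infDist_pt A).pow 2

lemma integral_lt_integral_of_ae_le_of_ae_lt_on {α : Type*} [MeasurableSpace α] {μ : Measure α}
    {f g : α → ℝ} (hf : Integrable f μ) (hg : Integrable g μ) (hle : f ≤ᵐ[μ] g) {s : Set α}
    (hs : μ s ≠ 0) (hlt : ∀ᵐ x ∂μ, x ∈ s → f x < g x) : ∫ x, f x ∂μ < ∫ x, g x ∂μ := by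
  rw [← sub_pos, ← integral_sub hg hf,
    integral_pos_iff_support_of_nonneg_ae (hle.mono fun x hx => sub_nonneg.2 hx) (hg.sub hf)]
  refine (pos_iff_ne_zero.2 hs).trans_le (measure_mono_ae ?_)
  filter_upwards [hlt] with x hx hxs
  exact (sub_pos.2 (hx hxs)).ne'

lemma mem_support_of_smul_map_le {X : Type*} [TopologicalSpace X] [MeasurableSpace X]
    [BorelSpace X] {μ : Measure X} {f : X → X} (hf : Continuous f) {c : ℝ≥0∞} (hc : c ≠ 0)
    (hle : c • μ.map f ≤ μ) {x : X} (hx : x ∈ μ.support) : f x ∈ μ.support := by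
  rw [Measure.mem_support_iff_forall] at hx ⊢
  intro U hU
  calc 0 < c * μ (f ⁻¹' U) := ENNReal.mul_pos hc (hx _ (hf.continuousAt.preimage_mem_nhds hU)).ne'
    _ ≤ c * μ.map f U := mul_le_mul_right (Measure.le_map_apply hf.aemeasurable U) c
    _ ≤ μ U := hle U

lemma restrict_smul_map_add_smul_map {X Y : Type*} [MeasurableSpace X] [MeasurableSpace Y]
    {μ : Measure X} {f g : X → Y} (hf : Measurable f) (hg : Measurable g) {s : Set Y}
    (hs : MeasurableSet s) (hfs : ∀ᵐ x ∂μ, f x ∈ s) (hgs : ∀ᵐ x ∂μ, g x ∉ s) (c : ℝ≥0∞) :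
    (c • μ.map f + c • μ.map g).restrict s = c • μ.map f := by
  rw [Measure.restrict_add, Measure.restrict_smul, Measure.restrict_smul,
    Measure.restrict_eq_self_of_ae_mem ((ae_map_iff hf.aemeasurable hs).2 hfs),
    Measure.restrict_eq_zero.2 (measure_eq_zero_iff_ae_notMem.2
      ((ae_map_iff hg.aemeasurable hs.compl).2 hgs)), smul_zero, add_zero]

section SupportedOnIcc

variable {P : Measure ℝ} [IsFiniteMeasure P] {l r : ℝ} {n : ℕ} {α : Set ℝ}

lemma integrable_of_ae_mem_Icc (hP : ∀ᵐ x ∂P, x ∈ Icc l r) {g : ℝ → ℝ} (hg : Continuous g) :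
    Integrable g P := by
  rw [← Measure.restrict_eq_self_of_ae_mem hP]
  exact hg.integrableOn_Icc

lemma integrable_infDist_sq (hP : ∀ᵐ x ∂P, x ∈ Icc l r) (A : Set ℝ) :
    Integrable (fun x => infDist x A ^ 2) P :=
  integrable_of_ae_mem_Icc hP (continuous_infDist_sq A)

lemma setIntegral_sub_sq_le_err (hP : ∀ᵐ x ∂P, x ∈ Icc l r)
    {A : Set ℝ} (hA : A.Finite) (hne : A.Nonempty) {s : Set ℝ} (hs : MeasurableSet s) {p : ℝ}
    (hp : ∀ x ∈ s, ∀ a ∈ A, |x - p| ≤ |x - a|) : ∫ x in s, (x - p) ^ 2 ∂P ≤ err P A := by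
  rw [err_eq_integral_infDist_sq P hA hne]
  refine (setIntegral_mono_on (integrable_of_ae_mem_Icc hP (by fun_prop)).integrableOn
    (integrable_infDist_sq hP A).integrableOn hs fun x hx => ?_).trans
    (setIntegral_le_integral (integrable_infDist_sq hP A) (ae_of_all _ fun x => by positivity))
  rw [← sq_abs]
  refine pow_le_pow_left₀ (abs_nonneg _) ((le_infDist hne).2 fun a ha => ?_) 2
  rw [Real.dist_eq]
  exact hp x hx a ha

lemma err_insert_lt (hP : ∀ᵐ x ∂P, x ∈ Icc l r) {γ : Set ℝ} (hγ : γ.Finite)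
    (hne : γ.Nonempty) {p : ℝ} (hp : p ∈ P.support) (hpγ : p ∉ γ) :
    err P (insert p γ) < err P γ := by
  obtain ⟨δ, hδ, hball⟩ := isOpen_iff.1 hγ.isClosed.isOpen_compl p hpγ
  rw [err_eq_integral_infDist_sq P (hγ.insert p) (insert_nonempty p γ),
    err_eq_integral_infDist_sq P hγ hne]
  refine integral_lt_integral_of_ae_le_of_ae_lt_on (integrable_infDist_sq hP _)
    (integrable_infDist_sq hP _) (ae_of_all _ fun x => ?_)
    ((Measure.mem_support_iff_forall p).1 hp _ (ball_mem_nhds p (half_pos hδ))).ne'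
    (ae_of_all _ fun x hx => ?_)
  · exact pow_le_pow_left₀ infDist_nonneg (infDist_le_infDist_of_subset (subset_insert p γ) hne) 2
  · have hpx : dist x p < δ / 2 := hx
    have hfar : δ / 2 < infDist x γ := by
      obtain ⟨b, hb, hxb⟩ := hγ.isCompact.exists_infDist_eq_dist hne x
      have hpb : δ ≤ dist p b := not_lt.1 fun h => hball (mem_ball'.2 h) hb
      linarith [dist_triangle p x b, dist_comm x p]
    exact pow_lt_pow_left₀ ((infDist_le_dist_of_mem (mem_insert p γ)).trans_lt (hpx.trans hfar))
      infDist_nonneg two_ne_zero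

lemma IsOptimal.measure_voronoi_ne_zero (hP : ∀ᵐ x ∂P, x ∈ Icc l r)
    (hinf : P.support.Infinite) (hα : IsOptimal P n α) {a : ℝ} (ha : a ∈ α) :
    P (voronoi α a) ≠ 0 := by
  obtain ⟨hfin, hne, hcard, hopt⟩ := hα
  intro h0
  rcases (α \ {a}).eq_empty_or_nonempty with hsing | hβne
  · have huniv : voronoi α a = univ := eq_univ_of_forall fun x b hb => by
      rw [sdiff_eq_empty, subset_singleton_iff] at hsing
      rw [hsing b hb]
    rw [huniv, Measure.measure_univ_eq_zero] at h0
    simpa [h0] using hinf.nonempty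
  have hβ : (α \ {a}).Finite := hfin.sdiff
  have herr : err P (α \ {a}) = err P α := by
    rw [err_eq_integral_infDist_sq P hβ hβne, err_eq_integral_infDist_sq P hfin hne]
    refine integral_congr_ae ?_
    filter_upwards [measure_eq_zero_iff_ae_notMem.1 h0] with x hx
    obtain ⟨b, hb, hxb⟩ := hfin.isCompact.exists_infDist_eq_dist hne x
    have hba : b ≠ a := fun h => hx (mem_voronoi_of_infDist_eq (h ▸ hxb))
    have hle : infDist x (α \ {a}) ≤ infDist x α :=
      hxb ▸ infDist_le_dist_of_mem ⟨hb, hba⟩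
    rw [le_antisymm hle (infDist_le_infDist_of_subset sdiff_subset hβne)]
  obtain ⟨p, hp, hpβ⟩ := (hinf.sdiff hβ).nonempty
  have hcard' : (insert p (α \ {a})).ncard ≤ n :=
    (ncard_insert_le p _).trans ((ncard_sdiff_singleton_add_one ha hfin).trans_le hcard)
  have hq := quantErr_le_err P (hβ.insert p) (insert_nonempty _ _) hcard'
  have hlt := err_insert_lt hP hβ hβne hp hpβ
  linarith

lemma IsOptimal.exists_abs_sub_le (hP : ∀ᵐ x ∂P, x ∈ Icc l r) (hinf : P.support.Infinite)
    (hα : IsOptimal P n α) {a : ℝ} (ha : a ∈ α) (c : ℝ) : ∃ x ∈ Icc l r, |x - a| ≤ |x - c| := by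
  by_contra! hc
  have hvor := hα.measure_voronoi_ne_zero hP hinf ha
  obtain ⟨hfin, hne, hcard, hopt⟩ := hα
  set β := insert c (α \ {a})
  have hβ : β.Finite := hfin.sdiff.insert c
  have hcard' : β.ncard ≤ n :=
    (ncard_insert_le c _).trans ((ncard_sdiff_singleton_add_one ha hfin).trans_le hcard)
  have hβc : ∀ x, infDist x β ≤ |x - c| := fun x =>
    Real.dist_eq x c ▸ infDist_le_dist_of_mem (mem_insert c _)
  have hle : ∀ x ∈ Icc l r, infDist x β ≤ infDist x α := fun x hx =>
    (le_infDist hne).2 fun b hb => by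
      by_cases hba : b = a
      · rw [Real.dist_eq, hba]
        exact (hβc x).trans (hc x hx).le
      · exact infDist_le_dist_of_mem (mem_insert_of_mem c ⟨hb, hba⟩)
  have hlt : err P β < err P α := by
    rw [err_eq_integral_infDist_sq P hβ (insert_nonempty _ _),
      err_eq_integral_infDist_sq P hfin hne]
    refine integral_lt_integral_of_ae_le_of_ae_lt_on (integrable_infDist_sq hP _)
      (integrable_infDist_sq hP _) ?_ hvor ?_
    · filter_upwards [hP] with x hx
      exact pow_le_pow_left₀ infDist_nonneg (hle x hx) 2
    · filter_upwards [hP] with x hx hxv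
      refine pow_lt_pow_left₀ ?_ infDist_nonneg two_ne_zero
      rw [infDist_eq_of_mem_voronoi ha hxv]
      exact (hβc x).trans_lt (hc x hx)
  have hq := quantErr_le_err P hβ (insert_nonempty _ _) hcard'
  linarith

lemma IsOptimal.subset_Icc (hP : ∀ᵐ x ∂P, x ∈ Icc l r) (hinf : P.support.Infinite)
    (hα : IsOptimal P n α) : α ⊆ Icc l r := by
  intro a ha
  by_contra hal
  rcases not_and_or.1 hal with hla | har
  · obtain ⟨x, hx, hle⟩ := hα.exists_abs_sub_le hP hinf ha l
    rw [abs_of_nonneg (by linarith [hx.1]), abs_of_nonneg (by linarith [hx.1])] at hle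
    linarith
  · obtain ⟨x, hx, hle⟩ := hα.exists_abs_sub_le hP hinf ha r
    rw [abs_of_nonpos (by linarith [hx.2]), abs_of_nonpos (by linarith [hx.2])] at hle
    linarith

end SupportedOnIcc

lemma integral_quadratic {P : Measure ℝ} [IsProbabilityMeasure P] {l r : ℝ}
    (hP : ∀ᵐ x ∂P, x ∈ Icc l r) {f : ℝ → ℝ} {a b c : ℝ}
    (hf : ∀ x, f x = a * x ^ 2 + b * x + c) :
    ∫ x, f x ∂P = a * ∫ x, x ^ 2 ∂P + b * ∫ x, x ∂P + c := by
  have hsq := (integrable_of_ae_mem_Icc hP (continuous_pow 2)).const_mul a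
  have hid := (integrable_of_ae_mem_Icc hP continuous_id').const_mul b
  simp only [hf]
  rw [integral_add (f := fun x => a * x ^ 2 + b * x) (hsq.add hid) (integrable_const c),
    integral_add hsq hid, integral_const_mul, integral_const_mul, integral_const, probReal_univ,
    one_smul]

lemma Smap_one (x : ℝ) : Smap 1 x = x / 3 := by
  simp [Smap]

lemma Smap_add_two (j : ℕ) (x : ℝ) : Smap (j + 2) x = Smap (j + 1) x / 3 + 2 / 3 := by
  simp only [Smap, Nat.add_sub_cancel, show j + 2 - 1 = j + 1 by omega]
  field_simp
  ring

lemma measurable_Smap (j : ℕ) : Measurable (Smap j) := by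
  unfold Smap
  fun_prop

lemma SelfSim.measure_eq_tsum {P : Measure ℝ} (hself : SelfSim P) {s : Set ℝ}
    (hs : MeasurableSet s) :
    P s = ∑' j : ℕ, ((2 : ℝ≥0∞) ^ (j + 1))⁻¹ * P (Smap (j + 1) ⁻¹' s) := by
  conv_lhs => rw [hself]
  simp only [Measure.sum_apply _ hs, Measure.smul_apply, smul_eq_mul,
    Measure.map_apply (measurable_Smap _) hs]

lemma SelfSim.eq_smul_map_add_smul_map {P : Measure ℝ} (hself : SelfSim P) :
    P = (2⁻¹ : ℝ≥0∞) • P.map (· / 3) + (2⁻¹ : ℝ≥0∞) • P.map (· / 3 + 2 / 3) := by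
  ext s hs
  have hT : Measurable fun x : ℝ => x / 3 + 2 / 3 := by fun_prop
  rw [Measure.add_apply, Measure.smul_apply, Measure.smul_apply, smul_eq_mul, smul_eq_mul,
    Measure.map_apply (by fun_prop) hs, Measure.map_apply hT hs, hself.measure_eq_tsum hs,
    hself.measure_eq_tsum (hT hs), tsum_eq_zero_add' ENNReal.summable, ← ENNReal.tsum_mul_left]
  congr 1
  · simp only [zero_add, pow_one]
    congr 2
    ext x
    simp [Smap_one]
  · refine tsum_congr fun j => ?_
    have hpre : Smap (j + 1 + 1) ⁻¹' s = Smap (j + 1) ⁻¹' ((· / 3 + 2 / 3) ⁻¹' s) := by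
      ext x
      simp [Smap_add_two]
    rw [hpre, ← mul_assoc, ← ENNReal.mul_inv (by simp) (by simp), ← pow_succ']

section SelfSimilar

variable {P : Measure ℝ}

lemma SelfSim.restrict_Icc_left (hself : SelfSim P) (hP : ∀ᵐ x ∂P, x ∈ Icc (0 : ℝ) 1) :
    P.restrict (Icc 0 (1 / 3)) = (2⁻¹ : ℝ≥0∞) • P.map (· / 3) := by
  conv_lhs => rw [hself.eq_smul_map_add_smul_map]
  refine restrict_smul_map_add_smul_map (by fun_prop) (by fun_prop) measurableSet_Icc ?_ ?_ _
  all_goals filter_upwards [hP] with x hx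
  · exact ⟨by linarith [hx.1], by linarith [hx.2]⟩
  · exact fun h => by linarith [hx.1, h.2]

lemma SelfSim.restrict_Icc_right (hself : SelfSim P) (hP : ∀ᵐ x ∂P, x ∈ Icc (0 : ℝ) 1) :
    P.restrict (Icc (2 / 3) 1) = (2⁻¹ : ℝ≥0∞) • P.map (· / 3 + 2 / 3) := by
  conv_lhs => rw [hself.eq_smul_map_add_smul_map, add_comm]
  refine restrict_smul_map_add_smul_map (by fun_prop) (by fun_prop) measurableSet_Icc ?_ ?_ _
  all_goals filter_upwards [hP] with x hx
  · exact ⟨by linarith [hx.1], by linarith [hx.2]⟩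
  · exact fun h => by linarith [hx.2, h.1]

lemma SelfSim.setIntegral_Icc_left (hself : SelfSim P) (hP : ∀ᵐ x ∂P, x ∈ Icc (0 : ℝ) 1)
    {g : ℝ → ℝ} (hg : Continuous g) :
    ∫ x in Icc 0 (1 / 3), g x ∂P = (∫ x, g (x / 3) ∂P) / 2 := by
  rw [hself.restrict_Icc_left hP, integral_smul_measure,
    integral_map (by fun_prop) hg.aestronglyMeasurable]
  simp [div_eq_inv_mul]

lemma SelfSim.setIntegral_Icc_right (hself : SelfSim P) (hP : ∀ᵐ x ∂P, x ∈ Icc (0 : ℝ) 1)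
    {g : ℝ → ℝ} (hg : Continuous g) :
    ∫ x in Icc (2 / 3) 1, g x ∂P = (∫ x, g (x / 3 + 2 / 3) ∂P) / 2 := by
  rw [hself.restrict_Icc_right hP, integral_smul_measure,
    integral_map (by fun_prop) hg.aestronglyMeasurable]
  simp [div_eq_inv_mul]

lemma SelfSim.integral_eq_setIntegral_add [IsFiniteMeasure P] (hself : SelfSim P)
    (hP : ∀ᵐ x ∂P, x ∈ Icc (0 : ℝ) 1)
    {g : ℝ → ℝ} (hg : Continuous g) :
    ∫ x, g x ∂P = ∫ x in Icc 0 (1 / 3), g x ∂P + ∫ x in Icc (2 / 3) 1, g x ∂P := by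
  have hint := integrable_of_ae_mem_Icc hP hg
  rw [← integral_add_measure hint.restrict hint.restrict, hself.restrict_Icc_left hP,
    hself.restrict_Icc_right hP, ← hself.eq_smul_map_add_smul_map]

variable [IsProbabilityMeasure P] {A : Set ℝ}

lemma SelfSim.support_infinite (hself : SelfSim P) (hP : ∀ᵐ x ∂P, x ∈ Icc (0 : ℝ) 1) :
    P.support.Infinite := by
  have hcan := hself.eq_smul_map_add_smul_map
  have hleft : (2⁻¹ : ℝ≥0∞) • P.map (· / 3) ≤ P := by
    conv_rhs => rw [hcan]
    exact Measure.le_add_right le_rfl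
  have hright : (2⁻¹ : ℝ≥0∞) • P.map (· / 3 + 2 / 3) ≤ P := by
    conv_rhs => rw [hcan]
    exact Measure.le_add_left le_rfl
  obtain ⟨x₀, hx₀⟩ := Measure.nonempty_support (IsProbabilityMeasure.ne_zero P)
  have hx₀I := Measure.support_subset_of_isClosed isClosed_Icc hP hx₀
  set y := x₀ / 3 + 2 / 3
  have hy : y ∈ P.support := mem_support_of_smul_map_le (by fun_prop) (by simp) hright hx₀
  have hy0 : y ≠ 0 := by have := hx₀I.1; positivity
  have hmem : ∀ k : ℕ, y / 3 ^ k ∈ P.support := by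
    intro k
    induction k with
    | zero => simpa using hy
    | succ k ih =>
      rw [pow_succ, ← div_div]
      exact mem_support_of_smul_map_le (by fun_prop) (by simp) hleft ih
  refine infinite_of_injective_forall_mem (fun a b hab => ?_) hmem
  rw [div_eq_div_iff (by positivity) (by positivity)] at hab
  exact (pow_right_injective₀ (by norm_num : (0 : ℝ) < 3) (by norm_num)
    (mul_left_cancel₀ hy0 hab)).symm

lemma SelfSim.integral_id (hself : SelfSim P) (hP : ∀ᵐ x ∂P, x ∈ Icc (0 : ℝ) 1) :
    ∫ x, x ∂P = 1 / 2 := by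
  have h := hself.integral_eq_setIntegral_add hP continuous_id'
  rw [hself.setIntegral_Icc_left hP continuous_id', hself.setIntegral_Icc_right hP continuous_id',
    integral_quadratic hP (f := fun x => x / 3) (a := 0) (b := 1 / 3) (c := 0) (fun x => by ring),
    integral_quadratic hP (f := fun x => x / 3 + 2 / 3) (a := 0) (b := 1 / 3) (c := 2 / 3)
      (fun x => by ring)] at h
  linarith

lemma SelfSim.integral_sq (hself : SelfSim P) (hP : ∀ᵐ x ∂P, x ∈ Icc (0 : ℝ) 1) :
    ∫ x, x ^ 2 ∂P = 3 / 8 := by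
  have h := hself.integral_eq_setIntegral_add hP (continuous_pow 2)
  rw [hself.setIntegral_Icc_left hP (continuous_pow 2),
    hself.setIntegral_Icc_right hP (continuous_pow 2),
    integral_quadratic hP (f := fun x => (x / 3) ^ 2) (a := 1 / 9) (b := 0) (c := 0)
      (fun x => by ring),
    integral_quadratic hP (f := fun x => (x / 3 + 2 / 3) ^ 2) (a := 1 / 9) (b := 4 / 9)
      (c := 4 / 9) (fun x => by ring),
    hself.integral_id hP] at h
  linarith

lemma SelfSim.setIntegral_Icc_left_sub_sq (hself : SelfSim P) (hP : ∀ᵐ x ∂P, x ∈ Icc (0 : ℝ) 1)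
    (p : ℝ) : ∫ x in Icc 0 (1 / 3), (x - p) ^ 2 ∂P = (1 / 24 - p / 3 + p ^ 2) / 2 := by
  rw [hself.setIntegral_Icc_left hP (by fun_prop),
    integral_quadratic hP (a := 1 / 9) (b := -2 * p / 3) (c := p ^ 2) (fun x => by ring),
    hself.integral_id hP, hself.integral_sq hP]
  ring

lemma SelfSim.setIntegral_Icc_right_sub_sq (hself : SelfSim P) (hP : ∀ᵐ x ∂P, x ∈ Icc (0 : ℝ) 1)
    (p : ℝ) :
    ∫ x in Icc (2 / 3) 1, (x - p) ^ 2 ∂P = (1 / 24 - (1 - p) / 3 + (1 - p) ^ 2) / 2 := by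
  rw [hself.setIntegral_Icc_right hP (by fun_prop),
    integral_quadratic hP (a := 1 / 9) (b := 2 * (2 / 3 - p) / 3) (c := (2 / 3 - p) ^ 2)
      (fun x => by ring), hself.integral_id hP, hself.integral_sq hP]
  ring

lemma SelfSim.err_pair_le (hself : SelfSim P)
    (hP : ∀ᵐ x ∂P, x ∈ Icc (0 : ℝ) 1) : err P {1 / 6, 5 / 6} ≤ 1 / 72 := by
  have hpair : ({1 / 6, 5 / 6} : Set ℝ).Finite := toFinite _
  have hsq : Continuous fun x : ℝ => (x - 1 / 6) ^ 2 := by fun_prop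
  have hsq' : Continuous fun x : ℝ => (x - 5 / 6) ^ 2 := by fun_prop
  rw [err_eq_integral_infDist_sq P hpair (insert_nonempty _ _)]
  calc ∫ x, infDist x {1 / 6, 5 / 6} ^ 2 ∂P
      = ∫ x in Icc 0 (1 / 3), infDist x {1 / 6, 5 / 6} ^ 2 ∂P
        + ∫ x in Icc (2 / 3) 1, infDist x {1 / 6, 5 / 6} ^ 2 ∂P :=
        hself.integral_eq_setIntegral_add hP (continuous_infDist_sq _)
    _ ≤ ∫ x in Icc 0 (1 / 3), (x - 1 / 6) ^ 2 ∂P + ∫ x in Icc (2 / 3) 1, (x - 5 / 6) ^ 2 ∂P := by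
        gcongr ?_ + ?_
        · exact setIntegral_mono_on (integrable_infDist_sq hP _).integrableOn
            (integrable_of_ae_mem_Icc hP hsq).integrableOn measurableSet_Icc
            fun x _ => infDist_sq_le (mem_insert _ _) x
        · exact setIntegral_mono_on (integrable_infDist_sq hP _).integrableOn
            (integrable_of_ae_mem_Icc hP hsq').integrableOn measurableSet_Icc
            fun x _ => infDist_sq_le (mem_insert_of_mem _ (mem_singleton _)) x
    _ = 1 / 72 := by
        rw [hself.setIntegral_Icc_left_sub_sq hP, hself.setIntegral_Icc_right_sub_sq hP]
        norm_num

lemma SelfSim.one_div_48_le_err_of_Icc_left (hself : SelfSim P)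
    (hP : ∀ᵐ x ∂P, x ∈ Icc (0 : ℝ) 1) {A : Set ℝ} (hA : A.Finite) (hne : A.Nonempty) {p : ℝ}
    (hp : p = 0 ∨ p = 1 / 3) (h : ∀ x ∈ Icc (0 : ℝ) (1 / 3), ∀ a ∈ A, |x - p| ≤ |x - a|) :
    1 / 48 ≤ err P A := by
  have hle := setIntegral_sub_sq_le_err hP hA hne measurableSet_Icc h
  rw [hself.setIntegral_Icc_left_sub_sq hP] at hle
  rcases hp with rfl | rfl <;> linarith

lemma SelfSim.one_div_48_le_err_of_Icc_right (hself : SelfSim P)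
    (hP : ∀ᵐ x ∂P, x ∈ Icc (0 : ℝ) 1) {A : Set ℝ} (hA : A.Finite) (hne : A.Nonempty) {p : ℝ}
    (hp : p = 2 / 3 ∨ p = 1) (h : ∀ x ∈ Icc (2 / 3 : ℝ) 1, ∀ a ∈ A, |x - p| ≤ |x - a|) :
    1 / 48 ≤ err P A := by
  have hle := setIntegral_sub_sq_le_err hP hA hne measurableSet_Icc h
  rw [hself.setIntegral_Icc_right_sub_sq hP] at hle
  rcases hp with rfl | rfl <;> linarith

lemma SelfSim.inter_Icc_left_nonempty (hself : SelfSim P) (hP : ∀ᵐ x ∂P, x ∈ Icc (0 : ℝ) 1)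
    (hA : A.Finite) (hne : A.Nonempty) (hsub : A ⊆ Icc 0 1) (herr : err P A < 1 / 48) :
    (A ∩ Icc 0 (1 / 3)).Nonempty := by
  by_contra hemp
  refine herr.not_ge (hself.one_div_48_le_err_of_Icc_left hP hA hne (Or.inr rfl)
    fun x hx a ha => ?_)
  have ha' : 1 / 3 < a := not_le.1 fun h => hemp ⟨a, ha, (hsub ha).1, h⟩
  rw [abs_sub_comm, abs_sub_comm x, abs_of_nonneg (by linarith [hx.2]),
    abs_of_nonneg (by linarith [hx.2])]
  linarith

lemma SelfSim.inter_Icc_right_nonempty (hself : SelfSim P) (hP : ∀ᵐ x ∂P, x ∈ Icc (0 : ℝ) 1)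
    (hA : A.Finite) (hne : A.Nonempty) (hsub : A ⊆ Icc 0 1) (herr : err P A < 1 / 48) :
    (A ∩ Icc (2 / 3) 1).Nonempty := by
  by_contra hemp
  refine herr.not_ge (hself.one_div_48_le_err_of_Icc_right hP hA hne (Or.inl rfl)
    fun x hx a ha => ?_)
  have ha' : a < 2 / 3 := not_le.1 fun h => hemp ⟨a, ha, h, (hsub ha).2⟩
  rw [abs_of_nonneg (by linarith [hx.1]), abs_of_nonneg (by linarith [hx.1])]
  linarith

/-- As `A` meets `[2/3, 1]`, a point `x ∈ [2/3, 1]` of the Voronoi region of `a ≤ 1/3` forces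
`x = 2/3` and `a = 1/3`; then no point of `A` lies in `(1/3, 1)`, so `[2/3, 1]` is served no
better than from `1`. -/
lemma SelfSim.voronoi_inter_Icc_right_eq_empty (hself : SelfSim P)
    (hP : ∀ᵐ x ∂P, x ∈ Icc (0 : ℝ) 1)
    (hA : A.Finite) (hne : A.Nonempty) (hsub : A ⊆ Icc 0 1) (herr : err P A < 1 / 48)
    {a : ℝ} (ha : a ∈ A ∩ Icc 0 (1 / 3)) :
    voronoi A a ∩ Icc (2 / 3) 1 = ∅ := by
  refine eq_empty_iff_forall_notMem.2 fun x ⟨hxv, hxR⟩ => ?_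
  obtain ⟨b, hb, hbR⟩ := hself.inter_Icc_right_nonempty hP hA hne hsub herr
  have hxa : |x - a| = x - a := abs_of_nonneg (by linarith [hxR.1, ha.2.2])
  have hxb : |x - b| ≤ 1 / 3 := abs_le.2 ⟨by linarith [hxR.1, hbR.2], by linarith [hxR.2, hbR.1]⟩
  have hx : x = 2 / 3 := by linarith [hxv b hb, hxR.1, ha.2.2]
  have ha' : a = 1 / 3 := by linarith [hxv b hb, hxR.1, ha.2.2]
  refine herr.not_ge (hself.one_div_48_le_err_of_Icc_right hP hA hne (Or.inr rfl)
    fun y hy c hcA => ?_)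
  have hc : c ≤ 1 / 3 ∨ 1 ≤ c := by
    have hxc := hxv c hcA
    rw [hxa, hx, ha', le_abs'] at hxc
    rcases hxc with h | h
    exacts [Or.inr (by linarith), Or.inl (by linarith)]
  rcases hc with hc | hc
  · exact abs_le_abs (by linarith [(hsub hcA).2]) (by linarith [hy.1])
  · rw [le_antisymm (hsub hcA).2 hc]

lemma SelfSim.voronoi_inter_Icc_left_eq_empty (hself : SelfSim P)
    (hP : ∀ᵐ x ∂P, x ∈ Icc (0 : ℝ) 1)
    (hA : A.Finite) (hne : A.Nonempty) (hsub : A ⊆ Icc 0 1) (herr : err P A < 1 / 48)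
    {a : ℝ} (ha : a ∈ A ∩ Icc (2 / 3) 1) :
    voronoi A a ∩ Icc 0 (1 / 3) = ∅ := by
  refine eq_empty_iff_forall_notMem.2 fun x ⟨hxv, hxL⟩ => ?_
  obtain ⟨b, hb, hbL⟩ := hself.inter_Icc_left_nonempty hP hA hne hsub herr
  have hxa : |x - a| = a - x := by
    rw [abs_sub_comm]
    exact abs_of_nonneg (by linarith [hxL.2, ha.2.1])
  have hxb : |x - b| ≤ 1 / 3 := abs_le.2 ⟨by linarith [hxL.1, hbL.2], by linarith [hxL.2, hbL.1]⟩
  have hx : x = 1 / 3 := by linarith [hxv b hb, hxL.2, ha.2.1]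
  have ha' : a = 2 / 3 := by linarith [hxv b hb, hxL.2, ha.2.1]
  refine herr.not_ge (hself.one_div_48_le_err_of_Icc_left hP hA hne (Or.inl rfl)
    fun y hy c hcA => ?_)
  have hc : c ≤ 0 ∨ 2 / 3 ≤ c := by
    have hxc := hxv c hcA
    rw [hxa, hx, ha', le_abs'] at hxc
    rcases hxc with h | h
    exacts [Or.inr (by linarith), Or.inl (by linarith)]
  rcases hc with hc | hc
  · rw [le_antisymm hc (hsub hcA).1]
  · rw [abs_sub_comm y, abs_sub_comm y]
    exact abs_le_abs (by linarith [(hsub hcA).1]) (by linarith [hy.2])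

end SelfSimilar

theorem optimal_meets_ends (P : Measure ℝ) [IsProbabilityMeasure P]
    (hsupp : P (Set.Icc 0 1) = 1) (hself : SelfSim P)
    (n : ℕ) (hn : 2 ≤ n) (α : Set ℝ) (hα : IsOptimal P n α) :
    (α ∩ Set.Icc (0 : ℝ) (1 / 3)).Nonempty ∧ (α ∩ Set.Icc (2 / 3 : ℝ) 1).Nonempty ∧
    (∀ a ∈ α ∩ Set.Icc (0 : ℝ) (1 / 3), voronoi α a ∩ Set.Icc (2 / 3 : ℝ) 1 = ∅) ∧
    (∀ a ∈ α ∩ Set.Icc (2 / 3 : ℝ) 1, voronoi α a ∩ Set.Icc (0 : ℝ) (1 / 3) = ∅) := by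
  have hP : ∀ᵐ x ∂P, x ∈ Icc (0 : ℝ) 1 :=
    mem_ae_iff.2 ((prob_compl_eq_zero_iff measurableSet_Icc).2 hsupp)
  have hsub := hα.subset_Icc hP (hself.support_infinite hP)
  obtain ⟨hfin, hne, -, hopt⟩ := hα
  have herr : err P α < 1 / 48 := by
    have hpair := quantErr_le_err P (toFinite {(1 / 6 : ℝ), 5 / 6}) (insert_nonempty _ _)
      ((ncard_pair (by norm_num)).trans_le hn)
    linarith [hself.err_pair_le hP]
  exact ⟨hself.inter_Icc_left_nonempty hP hfin hne hsub herr,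
    hself.inter_Icc_right_nonempty hP hfin hne hsub herr,
    fun a ha => hself.voronoi_inter_Icc_right_eq_empty hP hfin hne hsub herr ha,
    fun a ha => hself.voronoi_inter_Icc_left_eq_empty hP hfin hne hsub herr ha⟩

end
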